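/- Let X be a Banach space and let (A_m)_{m≥0} be a sequence of bounded linear operators on X admitting an exponential dichotomy on ℤ₀⁺ with constants C, λ > 0. Then the linear system x_{n+1} = A_n x_n, n ≥ 0, has the ℓ^∞-Lipschitz shadowing property: there exists L > 0 such that for every ε > 0 and every sequence (y_n)_{n≥0} ⊂ X with sup_{n≥0} ‖y_{n+1} − A_n y_n‖ ≤ Lε, there exists a sequence (x_n)_{n≥0} with x_{n+1} = A_n x_n for all n ≥ 0 and sup_{n≥0} ‖x_n − y_n‖ ≤ ε. -/

import Mathlib

/-!
With `z_n = y_{n+1} - A_n y_n`, it suffices to find a bounded solution `w` of the inhomogeneous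
equation `w_{n+1} = A_n w_n + z_n` with `sup ‖w‖ ≤ K sup ‖z‖`; then `x = y - w` is an orbit and
`L = 1 / K` works. The dichotomy gives such a `w` by the discrete variation-of-constants formula
`w_n = ∑_{k<n} 𝒜(n,k+1) P_{k+1} z_k - ∑_{k≥n} 𝒜(n,k+1) (Id - P_{k+1}) z_k`: both sums are dominated
by geometric series with ratio `e^{-λ}`, which gives `K = C (1 + e^{-λ}) / (1 - e^{-λ})`.
-/

/-- The forward products `𝒜(m,n) = A_{m-1} ⋯ A_n` for `m ≥ n ≥ 0`
(equal to the identity when `m ≤ n`). -/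
noncomputable def calAN {X : Type*} [NormedAddCommGroup X] [NormedSpace ℝ X]
    (A : ℕ → X →L[ℝ] X) (m n : ℕ) : X →L[ℝ] X :=
  (List.range (m - n)).foldl (fun B k => (A (n + k)).comp B)
    (ContinuousLinearMap.id ℝ X)

/-- The sequence `(A_m)_{m ≥ 0}` admits an exponential dichotomy on `ℤ₀⁺` with constants
`C, lam > 0`.  For `m ≤ n`, the operator `𝒜(m,n)` (the inverse of `𝒜(n,m)` restricted to
`Ker P_m`) is described implicitly: `w = 𝒜(m,n)(Id - P_n) x` iff `w ∈ Ker P_m` and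
`𝒜(n,m) w = x - P_n x`. -/
def ExpDichotomyN {X : Type*} [NormedAddCommGroup X] [NormedSpace ℝ X]
    (A : ℕ → X →L[ℝ] X) (C lam : ℝ) : Prop :=
  ∃ P : ℕ → X →L[ℝ] X,
    (∀ m, (P m).comp (P m) = P m) ∧
    (∀ m, (P (m + 1)).comp (A m) = (A m).comp (P m)) ∧
    (∀ m, Set.BijOn (A m) (LinearMap.ker (P m : X →ₗ[ℝ] X) : Set X)
      (LinearMap.ker (P (m + 1) : X →ₗ[ℝ] X) : Set X)) ∧
    (∀ m n : ℕ, n ≤ m → ‖(calAN A m n).comp (P n)‖ ≤ C * Real.exp (-lam * ((m : ℝ) - n))) ∧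
    (∀ m n : ℕ, m ≤ n → ∀ x w : X, w ∈ LinearMap.ker (P m : X →ₗ[ℝ] X) →
      calAN A n m w = x - P n x → ‖w‖ ≤ C * Real.exp (-lam * ((n : ℝ) - m)) * ‖x‖)

section Products

variable {X : Type*} [NormedAddCommGroup X] [NormedSpace ℝ X] (A : ℕ → X →L[ℝ] X)

lemma calAN_self (n : ℕ) : calAN A n n = ContinuousLinearMap.id ℝ X := by
  simp [calAN]

lemma calAN_succ_left {m n : ℕ} (h : n ≤ m) :
    calAN A (m + 1) n = (A m).comp (calAN A m n) := by
  unfold calAN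
  rw [show m + 1 - n = (m - n) + 1 by omega, List.range_succ, List.foldl_append,
    List.foldl_cons, List.foldl_nil, Nat.add_sub_cancel' h]

lemma calAN_succ_right {m n : ℕ} (h : n < m) :
    calAN A m n = (calAN A m (n + 1)).comp (A n) := by
  induction m, h using Nat.le_induction with
  | base => rw [calAN_succ_left A le_rfl, calAN_self, calAN_self]; rfl
  | succ m hm ih =>
    rw [calAN_succ_left A (by omega : n ≤ m), ih, calAN_succ_left A (by omega : n + 1 ≤ m)]
    rfl

lemma calAN_bijOn {S : ℕ → Set X} (hS : ∀ m, Set.BijOn (A m) (S m) (S (m + 1)))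
    {m n : ℕ} (h : n ≤ m) : Set.BijOn (calAN A m n) (S n) (S m) := by
  induction m, h using Nat.le_induction with
  | base => rw [calAN_self]; exact Set.bijOn_id _
  | succ m hm ih =>
    rw [calAN_succ_left A hm, ContinuousLinearMap.coe_comp]
    exact (hS m).comp ih

end Products

lemma sub_apply_mem_ker_of_comp_self {X : Type*} [NormedAddCommGroup X] [NormedSpace ℝ X]
    {Q : X →L[ℝ] X} (hQ : Q.comp Q = Q) (z : X) : z - Q z ∈ LinearMap.ker (Q : X →ₗ[ℝ] X) := by
  rw [LinearMap.mem_ker, ContinuousLinearMap.coe_coe, map_sub, ← ContinuousLinearMap.comp_apply,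
    hQ, sub_self]

lemma Real.exp_neg_mul_natCast_sub {lam : ℝ} {m n : ℕ} (h : n ≤ m) :
    Real.exp (-lam * ((m : ℝ) - n)) = Real.exp (-lam) ^ (m - n) := by
  rw [← Real.exp_nat_mul, Nat.cast_sub h]
  ring_nf

section UnstableBackward

variable {X : Type*} [NormedAddCommGroup X] [NormedSpace ℝ X] (A P : ℕ → X →L[ℝ] X)

/-- The operator `𝒜(n,k)(Id - P_k)` of the dichotomy, for `n ≤ k`. -/
noncomputable def unstableBackward (n k : ℕ) (z : X) : X :=
  Function.invFunOn (calAN A k n) (LinearMap.ker (P n : X →ₗ[ℝ] X)) (z - P k z)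

variable {A P} {n k : ℕ}

lemma unstableBackward_spec
    (hbij : ∀ m, Set.BijOn (A m) (LinearMap.ker (P m : X →ₗ[ℝ] X))
      (LinearMap.ker (P (m + 1) : X →ₗ[ℝ] X)))
    (hP : (P k).comp (P k) = P k) (h : n ≤ k) (z : X) :
    unstableBackward A P n k z ∈ LinearMap.ker (P n : X →ₗ[ℝ] X) ∧
      calAN A k n (unstableBackward A P n k z) = z - P k z :=
  Function.invFunOn_pos ((calAN_bijOn A hbij h).surjOn (sub_apply_mem_ker_of_comp_self hP z))

lemma unstableBackward_eq
    (hbij : ∀ m, Set.BijOn (A m) (LinearMap.ker (P m : X →ₗ[ℝ] X))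
      (LinearMap.ker (P (m + 1) : X →ₗ[ℝ] X)))
    (h : n ≤ k) {z w : X} (hw : w ∈ LinearMap.ker (P n : X →ₗ[ℝ] X))
    (hAw : calAN A k n w = z - P k z) : unstableBackward A P n k z = w := by
  have hspec := Function.invFunOn_pos (f := calAN A k n) ⟨w, hw, hAw⟩
  exact (calAN_bijOn A hbij h).injOn hspec.1 hw (hspec.2.trans hAw.symm)

lemma unstableBackward_self
    (hbij : ∀ m, Set.BijOn (A m) (LinearMap.ker (P m : X →ₗ[ℝ] X))
      (LinearMap.ker (P (m + 1) : X →ₗ[ℝ] X)))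
    (hP : (P n).comp (P n) = P n) (z : X) : unstableBackward A P n n z = z - P n z :=
  unstableBackward_eq hbij le_rfl (sub_apply_mem_ker_of_comp_self hP z) (by rw [calAN_self]; rfl)

lemma map_unstableBackward
    (hbij : ∀ m, Set.BijOn (A m) (LinearMap.ker (P m : X →ₗ[ℝ] X))
      (LinearMap.ker (P (m + 1) : X →ₗ[ℝ] X)))
    (hP : (P k).comp (P k) = P k) (h : n < k) (z : X) :
    A n (unstableBackward A P n k z) = unstableBackward A P (n + 1) k z := by
  obtain ⟨hker, hAw⟩ := unstableBackward_spec hbij hP h.le z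
  refine (unstableBackward_eq hbij h ((hbij n).mapsTo hker) ?_).symm
  rw [← ContinuousLinearMap.comp_apply, ← calAN_succ_right A h, hAw]

end UnstableBackward

section Solution

variable {X : Type*} [NormedAddCommGroup X] [NormedSpace ℝ X] (A P : ℕ → X →L[ℝ] X)
  (z : ℕ → X)

noncomputable def stableSum (n : ℕ) : X :=
  ∑ k ∈ Finset.range n, calAN A n (k + 1) (P (k + 1) (z k))

noncomputable def unstableSum (n : ℕ) : X :=
  ∑' j, unstableBackward A P n (n + j + 1) (z (n + j))

variable {A P z}

lemma stableSum_succ (n : ℕ) :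
    stableSum A P z (n + 1) = A n (stableSum A P z n) + P (n + 1) (z n) := by
  rw [stableSum, Finset.sum_range_succ, calAN_self, stableSum, map_sum]
  congr 1
  refine Finset.sum_congr rfl fun k hk => ?_
  rw [calAN_succ_left A (Finset.mem_range.mp hk)]
  rfl

variable {C r δ : ℝ}

lemma norm_stableSum_le (hC : 0 ≤ C) (hr0 : 0 ≤ r) (hr1 : r < 1)
    (hstable : ∀ m n, n ≤ m → ‖(calAN A m n).comp (P n)‖ ≤ C * r ^ (m - n))
    (hz : ∀ k, ‖z k‖ ≤ δ) (n : ℕ) : ‖stableSum A P z n‖ ≤ C * δ / (1 - r) := by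
  have hδ : 0 ≤ δ := (norm_nonneg _).trans (hz 0)
  have hterm : ∀ k ∈ Finset.range n,
      ‖calAN A n (k + 1) (P (k + 1) (z k))‖ ≤ C * δ * r ^ (n - 1 - k) := by
    intro k hk
    have hkn : k + 1 ≤ n := Finset.mem_range.mp hk
    calc ‖calAN A n (k + 1) (P (k + 1) (z k))‖
        ≤ ‖(calAN A n (k + 1)).comp (P (k + 1))‖ * ‖z k‖ :=
          ((calAN A n (k + 1)).comp (P (k + 1))).le_opNorm (z k)
      _ ≤ C * r ^ (n - (k + 1)) * δ :=
          mul_le_mul (hstable n (k + 1) hkn) (hz k) (norm_nonneg _) (by positivity)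
      _ = C * δ * r ^ (n - 1 - k) := by rw [show n - (k + 1) = n - 1 - k by omega]; ring
  calc ‖stableSum A P z n‖ ≤ ∑ k ∈ Finset.range n, C * δ * r ^ (n - 1 - k) :=
        (norm_sum_le _ _).trans (Finset.sum_le_sum hterm)
    _ = C * δ * ∑ k ∈ Finset.range n, r ^ k := by
        rw [← Finset.mul_sum, Finset.sum_range_reflect (r ^ ·) n]
    _ ≤ C * δ * (1 / (1 - r)) := by
        gcongr
        simpa using geom_sum_Ico_le_of_lt_one (m := 0) (n := n) hr0 hr1
    _ = C * δ / (1 - r) := by ring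

lemma norm_unstableBackward_shift_le (hC : 0 ≤ C) (hr0 : 0 ≤ r)
    (hunstable : ∀ n k, n ≤ k → ∀ x, ‖unstableBackward A P n k x‖ ≤ C * r ^ (k - n) * ‖x‖)
    (hz : ∀ k, ‖z k‖ ≤ δ) (n j : ℕ) :
    ‖unstableBackward A P n (n + j + 1) (z (n + j))‖ ≤ C * δ * r * r ^ j :=
  calc ‖unstableBackward A P n (n + j + 1) (z (n + j))‖
      ≤ C * r ^ (n + j + 1 - n) * ‖z (n + j)‖ := hunstable n _ (by omega) _
    _ ≤ C * r ^ (n + j + 1 - n) * δ := by gcongr; exact hz _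
    _ = C * δ * r * r ^ j := by rw [show n + j + 1 - n = j + 1 by omega]; ring

lemma summable_unstableBackward_shift [CompleteSpace X] (hC : 0 ≤ C) (hr0 : 0 ≤ r) (hr1 : r < 1)
    (hunstable : ∀ n k, n ≤ k → ∀ x, ‖unstableBackward A P n k x‖ ≤ C * r ^ (k - n) * ‖x‖)
    (hz : ∀ k, ‖z k‖ ≤ δ) (n : ℕ) :
    Summable fun j => unstableBackward A P n (n + j + 1) (z (n + j)) :=
  .of_norm_bounded ((summable_geometric_of_lt_one hr0 hr1).mul_left (C * δ * r))
    (norm_unstableBackward_shift_le hC hr0 hunstable hz n)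

lemma norm_unstableSum_le (hC : 0 ≤ C) (hr0 : 0 ≤ r) (hr1 : r < 1)
    (hunstable : ∀ n k, n ≤ k → ∀ x, ‖unstableBackward A P n k x‖ ≤ C * r ^ (k - n) * ‖x‖)
    (hz : ∀ k, ‖z k‖ ≤ δ) (n : ℕ) : ‖unstableSum A P z n‖ ≤ C * δ * r / (1 - r) :=
  tsum_of_norm_bounded ((hasSum_geometric_of_lt_one hr0 hr1).mul_left (C * δ * r))
    (norm_unstableBackward_shift_le hC hr0 hunstable hz n)

lemma map_unstableSum [CompleteSpace X]
    (hbij : ∀ m, Set.BijOn (A m) (LinearMap.ker (P m : X →ₗ[ℝ] X))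
      (LinearMap.ker (P (m + 1) : X →ₗ[ℝ] X)))
    (hP : ∀ m, (P m).comp (P m) = P m) (hC : 0 ≤ C) (hr0 : 0 ≤ r) (hr1 : r < 1)
    (hunstable : ∀ n k, n ≤ k → ∀ x, ‖unstableBackward A P n k x‖ ≤ C * r ^ (k - n) * ‖x‖)
    (hz : ∀ k, ‖z k‖ ≤ δ) (n : ℕ) :
    A n (unstableSum A P z n) = z n - P (n + 1) (z n) + unstableSum A P z (n + 1) := by
  have hsum := summable_unstableBackward_shift hC hr0 hr1 hunstable hz n
  have hshift : ∀ j, A n (unstableBackward A P n (n + j + 1) (z (n + j))) =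
      unstableBackward A P (n + 1) (n + j + 1) (z (n + j)) :=
    fun j => map_unstableBackward hbij (hP _) (by omega) _
  rw [unstableSum, (A n).map_tsum hsum, tsum_congr hshift,
    ((hsum.mapL (A n)).congr hshift).tsum_eq_zero_add, unstableSum]
  congr 1
  · exact unstableBackward_self hbij (hP _) _
  · refine tsum_congr fun j => ?_
    rw [show n + (j + 1) = n + 1 + j by omega]

end Solution

theorem ExpDichotomyN.exists_bounded_inhomogeneous_solution {X : Type*} [NormedAddCommGroup X]
    [NormedSpace ℝ X] [CompleteSpace X] {A : ℕ → X →L[ℝ] X} {C lam δ : ℝ} {z : ℕ → X}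
    (h : ExpDichotomyN A C lam) (hC : 0 ≤ C) (hlam : 0 < lam) (hz : ∀ n, ‖z n‖ ≤ δ) :
    ∃ w : ℕ → X, (∀ n, w (n + 1) = A n (w n) + z n) ∧
      ∀ n, ‖w n‖ ≤ C * (1 + Real.exp (-lam)) / (1 - Real.exp (-lam)) * δ := by
  obtain ⟨P, hP, -, hbij, hstable, hunstable⟩ := h
  set r := Real.exp (-lam)
  have hr0 : 0 ≤ r := (Real.exp_pos _).le
  have hr1 : r < 1 := Real.exp_lt_one_iff.mpr (by linarith)
  have hstable' : ∀ m n, n ≤ m → ‖(calAN A m n).comp (P n)‖ ≤ C * r ^ (m - n) :=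
    fun m n h => Real.exp_neg_mul_natCast_sub h ▸ hstable m n h
  have hunstable' : ∀ n k, n ≤ k → ∀ x, ‖unstableBackward A P n k x‖ ≤ C * r ^ (k - n) * ‖x‖ := by
    intro n k h x
    obtain ⟨hker, hAw⟩ := unstableBackward_spec hbij (hP k) h x
    exact Real.exp_neg_mul_natCast_sub h ▸ hunstable n k h x _ hker hAw
  refine ⟨fun n => stableSum A P z n - unstableSum A P z n, fun n => ?_, fun n => ?_⟩
  · beta_reduce
    rw [stableSum_succ, map_sub, map_unstableSum hbij hP hC hr0 hr1 hunstable' hz]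
    abel
  · calc ‖stableSum A P z n - unstableSum A P z n‖
        ≤ ‖stableSum A P z n‖ + ‖unstableSum A P z n‖ := norm_sub_le _ _
      _ ≤ C * δ / (1 - r) + C * δ * r / (1 - r) :=
        add_le_add (norm_stableSum_le hC hr0 hr1 hstable' hz n)
          (norm_unstableSum_le hC hr0 hr1 hunstable' hz n)
      _ = C * (1 + r) / (1 - r) * δ := by ring

/-- Corollary 4.2: if `(A_m)_{m≥0}` admits an exponential dichotomy on `ℤ₀⁺`, then the linear
system `x_{n+1} = A_n x_n`, `n ≥ 0`, has the `ℓ^∞`-Lipschitz shadowing property. -/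
theorem one_sided_linear_lipschitz_shadowing
    {X : Type*} [NormedAddCommGroup X] [NormedSpace ℝ X] [CompleteSpace X]
    (A : ℕ → X →L[ℝ] X) (C lam : ℝ) (hC : 0 < C) (hlam : 0 < lam)
    (h : ExpDichotomyN A C lam) :
    ∃ L : ℝ, 0 < L ∧ ∀ ε : ℝ, 0 < ε → ∀ y : ℕ → X,
      (∀ n : ℕ, ‖y (n + 1) - A n (y n)‖ ≤ L * ε) →
      ∃ x : ℕ → X, (∀ n : ℕ, x (n + 1) = A n (x n)) ∧
        ∀ n : ℕ, ‖x n - y n‖ ≤ ε := by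
  have hr1 : Real.exp (-lam) < 1 := Real.exp_lt_one_iff.mpr (by linarith)
  set K := C * (1 + Real.exp (-lam)) / (1 - Real.exp (-lam)) with hK_def
  have hK : 0 < K := div_pos (by positivity) (sub_pos.mpr hr1)
  refine ⟨K⁻¹, inv_pos.mpr hK, fun ε _ y hy => ?_⟩
  obtain ⟨w, hw, hw_le⟩ := h.exists_bounded_inhomogeneous_solution hC.le hlam hy
  refine ⟨y - w, fun n => ?_, fun n => ?_⟩
  · rw [Pi.sub_apply, Pi.sub_apply, hw, map_sub]
    abel
  · rw [Pi.sub_apply, sub_sub_cancel_left, norm_neg]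
    simpa only [← hK_def, mul_inv_cancel_left₀ hK.ne'] using hw_le n
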